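/- Let ψ : ℝ⁴ → Cl be differentiable and satisfy the Killing spin field equation with coefficient functions ω_μ^{νσ}, H_μ^{νi}, A_μ^{ij}. Then for every normal index i ∈ {4,…,9} and every σ ∈ {0,1,2,3}: ∂_σ( reverse(ψ)·e_i·ψ ) = − Σ_{β=0}^{3} H_σ^{βi} · reverse(ψ)·e_β·ψ + Σ_{j=4}^{9} A_σ^{ij} · reverse(ψ)·e_j·ψ. (The normal frame vectors 𝐞_i = reverse(ψ)e_iψ satisfy d𝐞_i = −H_i^β 𝐞_β + A_i^j 𝐞_j.) -/

import Mathlib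

open CliffordAlgebra

noncomputable section

/-- The Minkowski signs `(-1,1,…,1)` on `ℝ^{10}`. -/
def ηv : Fin 10 → ℝ := fun I => if I = 0 then -1 else 1

/-- The Minkowski metric `η = diag(-1,1,…,1)` as a matrix. -/
def ηm : Fin 10 → Fin 10 → ℝ := fun I J => if I = J then ηv I else 0

/-- The Minkowski quadratic form `Q(x) = -x₀² + x₁² + ⋯ + x₉²` on `ℝ^{10}`. -/
def Qm : QuadraticForm ℝ (Fin 10 → ℝ) := QuadraticMap.weightedSumSquares ℝ ηv

/-- The Clifford algebra of the Minkowski form on `ℝ^{10}`. -/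
abbrev Cl := CliffordAlgebra Qm

/-- The images `e_I` of the standard basis vectors of `ℝ^{10}` in `Cl`. -/
def e (I : Fin 10) : Cl := ι Qm (Pi.single I 1)

/-- Inclusion of tangent indices `{0,…,3}` into `{0,…,9}`. -/
def tIdx (μ : Fin 4) : Fin 10 := ⟨μ.1, by omega⟩

/-- Inclusion of normal indices `{4,…,9}` into `{0,…,9}`. -/
def nIdx (i : Fin 6) : Fin 10 := ⟨i.1 + 4, by omega⟩

/-- The Clifford-algebra-valued coefficient `K_μ` of the Killing spin field equation:
`K_μ = (1/4)·Σ_{ν,σ} ω_μ^{νσ} e_ν e_σ + (1/2)·Σ_{ν,i} H_μ^{νi} e_ν e_i + (1/4)·Σ_{i,j} A_μ^{ij} e_i e_j`. -/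
def Kfield (ω : Fin 4 → Fin 4 → Fin 4 → (Fin 4 → ℝ) → ℝ)
    (H : Fin 4 → Fin 4 → Fin 6 → (Fin 4 → ℝ) → ℝ)
    (A : Fin 4 → Fin 6 → Fin 6 → (Fin 4 → ℝ) → ℝ)
    (μ : Fin 4) (x : Fin 4 → ℝ) : Cl :=
  (1/4 : ℝ) • ∑ ν : Fin 4, ∑ σ : Fin 4, ω μ ν σ x • (e (tIdx ν) * e (tIdx σ))
    + (1/2 : ℝ) • ∑ ν : Fin 4, ∑ i : Fin 6, H μ ν i x • (e (tIdx ν) * e (nIdx i))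
    + (1/4 : ℝ) • ∑ i : Fin 6, ∑ j : Fin 6, A μ i j x • (e (nIdx i) * e (nIdx j))

/-! Since `∂_σ ψ = K_σ ψ` and `reverse` is an anti-automorphism,
`∂_σ (reverse ψ · e_i · ψ) = reverse ψ · (reverse K_σ · e_i + e_i · K_σ) · ψ`.
For vectors `u, v, w` the element `reverse (u v) w + w (u v)` is again a vector, namely
`⟪u, w⟫ v - ⟪v, w⟫ u + ⟪u, v⟫ w` with `⟪·,·⟫` the polar form, so
`reverse K_σ · e_i + e_i · K_σ` is a combination of the `e_J`: the tangent–tangent part of `K_σ`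
drops out because `η` is diagonal and `ω_σ^{νν} = 0`, the mixed part gives `-H_σ^{βi} e_β`, and
the normal part gives `A_σ^{ij} e_j` by antisymmetry.
Whatever norm `Cl` carries, it is finite-dimensional (as a vector space it is the exterior
algebra), so multiplication is a continuous bilinear map and the product rule applies. -/

theorem ExteriorAlgebra.exteriorPower_eq_bot_of_finrank_lt {K M : Type*} [Field K] [AddCommGroup M]
    [Module K M] [FiniteDimensional K M] {n : ℕ} (hn : Module.finrank K M < n) :
    ⋀[K]^n M = ⊥ :=
  Submodule.finrank_eq_zero.1 <| by
    rw [exteriorPower.finrank_eq, Nat.choose_eq_zero_of_lt hn]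

instance ExteriorAlgebra.instModuleFinite {K M : Type*} [Field K] [AddCommGroup M] [Module K M]
    [FiniteDimensional K M] : Module.Finite K (ExteriorAlgebra K M) := by
  set d := Module.finrank K M
  have htop : ⨆ i : Fin (d + 1), ⋀[K]^i M = ⊤ := by
    rw [eq_top_iff, ← CliffordAlgebra.iSup_ι_range_eq_top]
    refine iSup_le fun n => ?_
    rcases lt_or_ge d n with hn | hn
    · exact (exteriorPower_eq_bot_of_finrank_lt hn).le.trans bot_le
    · exact le_iSup (fun i : Fin (d + 1) => ⋀[K]^i M) ⟨n, by omega⟩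
  rw [Module.finite_def, ← htop]
  exact Submodule.fg_iSup _ fun i => Module.Finite.iff_fg.1 inferInstance

instance CliffordAlgebra.instModuleFinite {K M : Type*} [Field K] [AddCommGroup M] [Module K M]
    [FiniteDimensional K M] [Invertible (2 : K)] (Q : QuadraticForm K M) :
    Module.Finite K (CliffordAlgebra Q) :=
  Module.Finite.equiv (equivExterior Q).symm

theorem LinearMap.fderiv_apply_of_bilinear {𝕜 E F G H : Type*} [NontriviallyNormedField 𝕜]
    [CompleteSpace 𝕜] [NormedAddCommGroup E] [NormedSpace 𝕜 E] [NormedAddCommGroup F]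
    [NormedSpace 𝕜 F] [FiniteDimensional 𝕜 F] [NormedAddCommGroup G] [NormedSpace 𝕜 G]
    [FiniteDimensional 𝕜 G] [NormedAddCommGroup H] [NormedSpace 𝕜 H]
    (B : F →ₗ[𝕜] G →ₗ[𝕜] H) {f : E → F} {g : E → G} {x : E}
    (hf : DifferentiableAt 𝕜 f x) (hg : DifferentiableAt 𝕜 g x) (v : E) :
    fderiv 𝕜 (fun y => B (f y) (g y)) x v =
      B (fderiv 𝕜 f x v) (g x) + B (f x) (fderiv 𝕜 g x v) := by
  change fderiv 𝕜 (fun y => B.toContinuousBilinearMap (f y) (g y)) x v = _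
  rw [B.toContinuousBilinearMap.fderiv_of_bilinear hf hg]
  simp [add_comm]

theorem CliffordAlgebra.reverse_ι_mul_ι_mul_ι_add {R M : Type*} [CommRing R] [AddCommGroup M]
    [Module R M] {Q : QuadraticForm R M} (u v w : M) :
    reverse (ι Q u * ι Q v) * ι Q w + ι Q w * (ι Q u * ι Q v) =
      QuadraticMap.polar Q u w • ι Q v - QuadraticMap.polar Q v w • ι Q u
        + QuadraticMap.polar Q u v • ι Q w := by
  rw [reverse.map_mul, reverse_ι, reverse_ι, ← mul_assoc, ι_mul_ι_comm w u, sub_mul,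
    mul_assoc (ι Q u), ι_mul_ι_comm w v, mul_sub, ← Algebra.commutes, Algebra.smul_def,
    Algebra.smul_def, Algebra.smul_def, ← ι_mul_ι_add_swap u v, QuadraticMap.polar_comm Q w u,
    QuadraticMap.polar_comm Q w v]
  simp only [add_mul, mul_assoc]
  abel

theorem QuadraticMap.polar_weightedSumSquares {ι R : Type*} [Fintype ι] [CommRing R] (w : ι → R)
    (x y : ι → R) :
    polar (weightedSumSquares R w) x y = ∑ k, 2 * w k * x k * y k := by
  simp only [polar, weightedSumSquares_apply, Pi.add_apply, smul_eq_mul, ← Finset.sum_sub_distrib]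
  exact Finset.sum_congr rfl fun k _ => by ring

lemma polar_Qm_single (I J : Fin 10) :
    QuadraticMap.polar Qm (Pi.single I 1) (Pi.single J 1) = 2 * ηm I J := by
  rcases eq_or_ne I J with rfl | h
  · simp [Qm, Pi.single_apply, ηm]
  · simp [Qm, QuadraticMap.polar_weightedSumSquares, Pi.single_apply, ηm, h, h.symm]

lemma reverse_e_mul_e_mul_e_add (I J L : Fin 10) :
    reverse (e I * e J) * e L + e L * (e I * e J) =
      (2 * ηm I L) • e J - (2 * ηm J L) • e I + (2 * ηm I J) • e L := by
  simp only [e, reverse_ι_mul_ι_mul_ι_add, polar_Qm_single]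

lemma ηm_of_ne {I J : Fin 10} (h : I ≠ J) : ηm I J = 0 := if_neg h

lemma tIdx_ne_nIdx (ν : Fin 4) (j : Fin 6) : tIdx ν ≠ nIdx j := by
  simp only [tIdx, nIdx, ne_eq, Fin.mk.injEq]; omega

lemma tIdx_injective : Function.Injective tIdx := fun _ _ h => Fin.ext (Fin.mk.inj h)

lemma nIdx_injective : Function.Injective nIdx := fun _ _ h => Fin.ext (by simpa [nIdx] using h)

lemma ηv_nIdx (j : Fin 6) : ηv (nIdx j) = 1 :=
  if_neg (by simp only [nIdx, Fin.ext_iff, Fin.val_zero]; omega)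

lemma ηm_tIdx_tIdx (ν μ : Fin 4) :
    ηm (tIdx ν) (tIdx μ) = if ν = μ then ηv (tIdx ν) else 0 := by
  simp only [ηm, tIdx_injective.eq_iff]

lemma ηm_nIdx_nIdx (j k : Fin 6) : ηm (nIdx j) (nIdx k) = if j = k then 1 else 0 := by
  simp only [ηm, nIdx_injective.eq_iff, ηv_nIdx]

lemma reverse_Kfield_mul_add_mul (ω : Fin 4 → Fin 4 → Fin 4 → (Fin 4 → ℝ) → ℝ)
    (H : Fin 4 → Fin 4 → Fin 6 → (Fin 4 → ℝ) → ℝ)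
    (A : Fin 4 → Fin 6 → Fin 6 → (Fin 4 → ℝ) → ℝ) (σ : Fin 4) (x : Fin 4 → ℝ)
    (hω : ∀ ν, ω σ ν ν x = 0) (hA : ∀ j k, A σ j k x = - A σ k j x) (i : Fin 6) :
    reverse (Kfield ω H A σ x) * e (nIdx i) + e (nIdx i) * Kfield ω H A σ x =
      - ∑ β : Fin 4, H σ β i x • e (tIdx β) + ∑ j : Fin 6, A σ i j x • e (nIdx j) := by
  let Φ : Cl →ₗ[ℝ] Cl :=
    LinearMap.mulRight ℝ (e (nIdx i)) ∘ₗ reverse + LinearMap.mulLeft ℝ (e (nIdx i))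
  have hΦ (I J : Fin 10) : Φ (e I * e J) =
      (2 * ηm I (nIdx i)) • e J - (2 * ηm J (nIdx i)) • e I + (2 * ηm I J) • e (nIdx i) :=
    reverse_e_mul_e_mul_e_add I J (nIdx i)
  have htt : ∑ ν : Fin 4, ∑ μ : Fin 4, ω σ ν μ x • Φ (e (tIdx ν) * e (tIdx μ)) = 0 := by
    simp [hΦ, ηm_of_ne (tIdx_ne_nIdx _ _), ηm_tIdx_tIdx, smul_ite, hω]
  have htn : ∑ ν : Fin 4, ∑ j : Fin 6, H σ ν j x • Φ (e (tIdx ν) * e (nIdx j)) =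
      -(2 : ℝ) • ∑ ν : Fin 4, H σ ν i x • e (tIdx ν) := by
    simp [hΦ, ηm_of_ne (tIdx_ne_nIdx _ _), ηm_nIdx_nIdx, smul_ite, Finset.smul_sum, smul_smul,
      mul_comm _ (2 : ℝ)]
  have hnn : ∑ j : Fin 6, ∑ k : Fin 6, A σ j k x • Φ (e (nIdx j) * e (nIdx k)) =
      (4 : ℝ) • ∑ j : Fin 6, A σ i j x • e (nIdx j) := by
    have hA0 (j : Fin 6) : A σ j j x = 0 := by linarith [hA j j]
    simp only [hΦ, ηm_nIdx_nIdx, mul_ite, mul_one, mul_zero, ite_smul, zero_smul, smul_add,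
      smul_sub, Finset.sum_add_distrib, Finset.sum_sub_distrib, smul_ite, smul_smul, smul_zero,
      Finset.sum_ite_irrel, Finset.sum_const_zero, Finset.sum_ite_eq', Finset.sum_ite_eq,
      Finset.mem_univ, ↓reduceIte, hA _ i, hA0, neg_mul, neg_smul,
      sub_neg_eq_add, zero_mul, add_zero, Finset.smul_sum]
    rw [← Finset.sum_add_distrib]
    exact Finset.sum_congr rfl fun _ _ => by module
  change Φ (Kfield ω H A σ x) = _
  simp only [Kfield, map_add, map_smul, map_sum, htt, htn, hnn]
  module

/-- If `ψ` satisfies the Killing spin field equation, the normal frame vectors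
`𝐞_i = reverse(ψ) e_i ψ` satisfy `d𝐞_i = −H_i^β 𝐞_β + A_i^j 𝐞_j`. -/
theorem stmt_2 (nCl : AddGroupNorm Cl)
    (hns : ∀ (c : ℝ) (x : Cl), nCl (c • x) ≤ ‖c‖ * nCl x) :
    letI : NormedAddCommGroup Cl := nCl.toNormedAddCommGroup
    letI : NormedSpace ℝ Cl := { norm_smul_le := hns }
    ∀ (ψ : (Fin 4 → ℝ) → Cl)
      (ω : Fin 4 → Fin 4 → Fin 4 → (Fin 4 → ℝ) → ℝ)
      (H : Fin 4 → Fin 4 → Fin 6 → (Fin 4 → ℝ) → ℝ)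
      (A : Fin 4 → Fin 6 → Fin 6 → (Fin 4 → ℝ) → ℝ),
      Differentiable ℝ ψ →
      (∀ μ ν σ x, ω μ ν σ x = - ω μ σ ν x) →
      (∀ μ i j x, A μ i j x = - A μ j i x) →
      (∀ μ x, fderiv ℝ ψ x (Pi.single μ 1) = Kfield ω H A μ x * ψ x) →
      ∀ (i : Fin 6) (σ : Fin 4) (x : Fin 4 → ℝ),
        fderiv ℝ (fun y => reverse (Q := Qm) (ψ y) * e (nIdx i) * ψ y) x (Pi.single σ 1) =
          - ∑ β : Fin 4, H σ β i x • (reverse (Q := Qm) (ψ x) * e (tIdx β) * ψ x)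
          + ∑ j : Fin 6, A σ i j x • (reverse (Q := Qm) (ψ x) * e (nIdx j) * ψ x) := by
  let : NormedAddCommGroup Cl := nCl.toNormedAddCommGroup
  let : NormedSpace ℝ Cl := { norm_smul_le := hns }
  intro ψ ω H A hψ hω hA hK i σ x
  let B : Cl →ₗ[ℝ] Cl →ₗ[ℝ] Cl := LinearMap.mul ℝ Cl ∘ₗ LinearMap.mulRight ℝ (e (nIdx i)) ∘ₗ reverse
  have hω₀ (ν : Fin 4) : ω σ ν ν x = 0 := by linarith [hω σ ν ν x]
  have hframe := reverse_Kfield_mul_add_mul ω H A σ x hω₀ (fun j k => hA σ j k x) i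
  change fderiv ℝ (fun y => B (ψ y) (ψ y)) x _ = _
  rw [B.fderiv_apply_of_bilinear (hψ x) (hψ x), hK]
  calc B (Kfield ω H A σ x * ψ x) (ψ x) + B (ψ x) (Kfield ω H A σ x * ψ x)
      = reverse (ψ x) * (reverse (Kfield ω H A σ x) * e (nIdx i) + e (nIdx i) * Kfield ω H A σ x)
          * ψ x := by
        simp only [B, LinearMap.comp_apply, LinearMap.mul_apply', LinearMap.mulRight_apply,
          reverse.map_mul]
        noncomm_ring
    _ = _ := by
        rw [hframe]
        simp only [mul_add, add_mul, mul_neg, neg_mul, Finset.mul_sum, Finset.sum_mul,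
          mul_smul_comm, smul_mul_assoc, mul_assoc]
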